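/- Let X be a locally compact Hausdorff space. Then (RC(X), ⌢_X, CR(X)) is a complete local contact algebra, where F ⌢_X G iff F ∩ G ≠ ∅ and CR(X) is the set of compact regular closed subsets of X; in particular, CR(X) is an ideal of the Boolean algebra RC(X) and axioms (BC1)–(BC3) hold. -/
import Mathlib

/-- The set of regular closed subsets of a topological space `X`. -/
def RCset (X : Type*) [TopologicalSpace X] : Set (Set X) := {F | F = closure (interior F)}

lemma rc_closure_open {X : Type*} [TopologicalSpace X] {U : Set X} (hU : IsOpen U) :
    closure U ∈ RCset X := by
  show closure U = closure (interior (closure U))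
  apply subset_antisymm
  · exact closure_mono (hU.subset_interior_closure)
  · exact closure_mono interior_subset |>.trans (by rw [closure_closure])

lemma rc_isClosed {X : Type*} [TopologicalSpace X] {F : Set X} (hF : F ∈ RCset X) :
    IsClosed F := by rw [show F = closure (interior F) from hF]; exact isClosed_closure

lemma inter_cl_compl_empty {X : Type*} [TopologicalSpace X] {F G : Set X} :
    F ∩ closure Gᶜ = ∅ ↔ F ⊆ interior G := by
  rw [closure_compl, ← Set.disjoint_iff_inter_eq_empty, Set.disjoint_compl_right_iff_subset]

/-- for a locally compact Hausdorff space `X`,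
`(RC(X), ⌢_X, CR(X))` is a complete local contact algebra: the contact axioms
(C1)-(C4) hold for `F ⌢_X G ↔ (F ∩ G).Nonempty`, `CR(X)` (the compact regular
closed sets) is an ideal of `RC(X)`, axioms (BC1)-(BC3) hold (where
`F ≪ G ↔ F ∩ cl(Gᶜ) = ∅`), and `RC(X)` is complete (every family of regular
closed sets has a least upper bound, namely the closure of its union). -/
theorem standard_local_contact_algebra (X : Type*) [TopologicalSpace X]
    [LocallyCompactSpace X] [T2Space X] :
    -- contact axioms (C1)-(C4)
    ((∀ F ∈ RCset X, F ≠ ∅ → (F ∩ F).Nonempty) ∧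
     (∀ F ∈ RCset X, ∀ G ∈ RCset X, (F ∩ G).Nonempty → F ≠ ∅ ∧ G ≠ ∅) ∧
     (∀ F ∈ RCset X, ∀ G ∈ RCset X, (F ∩ G).Nonempty → (G ∩ F).Nonempty) ∧
     (∀ F ∈ RCset X, ∀ G ∈ RCset X, ∀ H ∈ RCset X,
        (F ∩ (G ∪ H)).Nonempty ↔ (F ∩ G).Nonempty ∨ (F ∩ H).Nonempty)) ∧
    -- CR(X) is an ideal of RC(X)
    ((∅ : Set X) ∈ RCset X ∧ IsCompact (∅ : Set X) ∧
     (∀ F ∈ RCset X, ∀ K ∈ RCset X, IsCompact K → F ⊆ K → IsCompact F) ∧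
     (∀ F ∈ RCset X, ∀ K ∈ RCset X, F ∪ K ∈ RCset X) ∧
     (∀ F ∈ RCset X, ∀ K ∈ RCset X, IsCompact F → IsCompact K → IsCompact (F ∪ K))) ∧
    -- (BC1)
    (∀ F ∈ RCset X, ∀ G ∈ RCset X, IsCompact F → F ∩ closure Gᶜ = ∅ →
       ∃ H ∈ RCset X, IsCompact H ∧ F ∩ closure Hᶜ = ∅ ∧ H ∩ closure Gᶜ = ∅) ∧
    -- (BC2)
    (∀ F ∈ RCset X, ∀ G ∈ RCset X, (F ∩ G).Nonempty →
       ∃ K ∈ RCset X, IsCompact K ∧ (F ∩ closure (interior (K ∩ G))).Nonempty) ∧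
    -- (BC3)
    (∀ F ∈ RCset X, F ≠ ∅ →
       ∃ K ∈ RCset X, IsCompact K ∧ K ≠ ∅ ∧ K ∩ closure Fᶜ = ∅) ∧
    -- completeness
    (∀ S : Set (Set X), (∀ F ∈ S, F ∈ RCset X) →
       closure (⋃₀ S) ∈ RCset X ∧ (∀ F ∈ S, F ⊆ closure (⋃₀ S)) ∧
       ∀ G ∈ RCset X, (∀ F ∈ S, F ⊆ G) → closure (⋃₀ S) ⊆ G) := by
  refine ⟨⟨?_, ?_, ?_, ?_⟩, ⟨?_, ?_, ?_, ?_, ?_⟩, ?_, ?_, ?_, ?_⟩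
  · intro F _ hF
    rw [Set.inter_self]
    exact Set.nonempty_iff_ne_empty.mpr hF
  · rintro F _ G _ ⟨x, hxF, hxG⟩
    exact ⟨Set.nonempty_iff_ne_empty.mp ⟨x, hxF⟩, Set.nonempty_iff_ne_empty.mp ⟨x, hxG⟩⟩
  · rintro F _ G _ ⟨x, hxF, hxG⟩; exact ⟨x, hxG, hxF⟩
  · intro F _ G _ H _
    rw [Set.inter_union_distrib_left, Set.union_nonempty]
  · show (∅ : Set X) = closure (interior ∅)
    simp
  · exact isCompact_empty
  · intro F hF K _ hKc hFK
    exact hKc.of_isClosed_subset (rc_isClosed hF) hFK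
  · intro F hF K hK
    show F ∪ K = closure (interior (F ∪ K))
    apply subset_antisymm
    · calc F ∪ K = closure (interior F) ∪ closure (interior K) := by rw [← hF, ← hK]
        _ = closure (interior F ∪ interior K) := closure_union.symm
        _ ⊆ closure (interior (F ∪ K)) := closure_mono
            (Set.union_subset (interior_mono Set.subset_union_left)
              (interior_mono Set.subset_union_right))
    · calc closure (interior (F ∪ K)) ⊆ closure (F ∪ K) := closure_mono interior_subset
        _ = F ∪ K := ((rc_isClosed hF).union (rc_isClosed hK)).closure_eq
  · intro F _ K _ hF hK; exact hF.union hK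
  · -- BC1
    intro F hF G hG hFc hsub
    rw [inter_cl_compl_empty] at hsub
    obtain ⟨L, hLc, hFL, hLG⟩ := exists_compact_between hFc isOpen_interior hsub
    refine ⟨closure (interior L), rc_closure_open isOpen_interior, ?_, ?_, ?_⟩
    · exact hLc.of_isClosed_subset isClosed_closure
        ((closure_mono interior_subset).trans_eq hLc.isClosed.closure_eq)
    · rw [inter_cl_compl_empty]
      exact hFL.trans isOpen_interior.subset_interior_closure
    · rw [inter_cl_compl_empty]
      calc closure (interior L) ⊆ closure L := closure_mono interior_subset
        _ = L := hLc.isClosed.closure_eq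
        _ ⊆ interior G := hLG
  · -- BC2
    rintro F hF G hG ⟨x, hxF, hxG⟩
    obtain ⟨K₀, hK₀c, hK₀mem⟩ := exists_compact_mem_nhds x
    refine ⟨closure (interior K₀), rc_closure_open isOpen_interior,
      hK₀c.of_isClosed_subset isClosed_closure
        ((closure_mono interior_subset).trans_eq hK₀c.isClosed.closure_eq), ⟨x, hxF, ?_⟩⟩
    -- x ∈ closure (interior (closure (interior K₀) ∩ G))
    rw [mem_closure_iff]
    intro V hV hxV
    have hxint : x ∈ interior K₀ := mem_interior_iff_mem_nhds.mpr hK₀mem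
    have hopen : IsOpen (V ∩ interior K₀) := hV.inter isOpen_interior
    have hxcl : x ∈ closure (interior G) := by rw [← hG]; exact hxG
    obtain ⟨z, hz⟩ := (mem_closure_iff.mp hxcl) _ hopen ⟨hxV, hxint⟩
    refine ⟨z, hz.1.1, ?_⟩
    rw [interior_inter]
    exact ⟨interior_mono subset_closure
      (by rw [interior_interior]; exact hz.1.2), hz.2⟩
  · -- BC3
    intro F hF hne
    have hint : (interior F).Nonempty := by
      rw [Set.nonempty_iff_ne_empty]
      intro h
      exact hne (by rw [hF, h, closure_empty])
    obtain ⟨x, hx⟩ := hint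
    obtain ⟨L, hLc, hxL, hLF⟩ := exists_compact_between
      (isCompact_singleton (x := x)) isOpen_interior (Set.singleton_subset_iff.mpr hx)
    refine ⟨closure (interior L), rc_closure_open isOpen_interior,
      hLc.of_isClosed_subset isClosed_closure
        ((closure_mono interior_subset).trans_eq hLc.isClosed.closure_eq), ?_, ?_⟩
    · apply Set.nonempty_iff_ne_empty.mp
      exact ⟨x, subset_closure (hxL rfl)⟩
    · rw [inter_cl_compl_empty]
      calc closure (interior L) ⊆ closure L := closure_mono interior_subset
        _ = L := hLc.isClosed.closure_eq
        _ ⊆ interior F := hLF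
  · -- completeness
    intro S hS
    have hub : ∀ F ∈ S, F ⊆ closure (⋃₀ S) :=
      fun F hF => subset_trans (Set.subset_sUnion_of_mem hF) subset_closure
    refine ⟨?_, hub, ?_⟩
    · show closure (⋃₀ S) = closure (interior (closure (⋃₀ S)))
      apply subset_antisymm
      · apply closure_minimal _ isClosed_closure
        intro y hy
        obtain ⟨F, hFS, hyF⟩ := hy
        have h1 : F = closure (interior F) := hS F hFS
        have h2 : interior F ⊆ interior (closure (⋃₀ S)) :=
          interior_mono ((Set.subset_sUnion_of_mem hFS).trans subset_closure)
        rw [h1] at hyF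
        exact closure_mono h2 hyF
      · exact (closure_mono interior_subset).trans (by rw [closure_closure])
    · intro G hG hub
      exact closure_minimal (Set.sUnion_subset hub) (rc_isClosed hG)
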